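/- Let $Q$ be a finite quiver, $M$ a finite-dimensional complex representation of $Q$ with $M_p = \mathbb{C}^{d_p}$ and structure matrices $A_v = (m_{v,j,i})$ for arrows $v: p \to q$, and $\mathbf{e} = (e_p)$ a dimension vector. A tuple $(N_p)_{p \in Q_0}$ of subspaces $N_p \subseteq \mathbb{C}^{d_p}$ with $\dim N_p = e_p$ defines a subrepresentation of $M$ (i.e. $A_v(N_p) \subseteq N_q$ for all arrows $v: p \to q$) if and only if for every arrow $v: p \to q$, every $(e_p-1)$-subset $I$ of $\{1,\dots,d_p\}$, and every $(e_q+1)$-subset $J$ of $\{1,\dots,d_q\}$, the Plücker coordinates of the $N_p$ satisfy $\sum_{i \notin I, j \in J} (-1)^{\epsilon(i,I)+\epsilon(j,J)} m_{v,j,i} \Delta_{I\cup\{i\}}(N_p) \Delta_{J\setminus\{j\}}(N_q) = 0$. -/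

import Mathlib

open Matrix Finset

def eps {d : ℕ} (i : Fin d) (I : Finset (Fin d)) : ℕ := (I.filter fun i' => i' ≤ i).card

noncomputable def plucker {d e : ℕ} (B : Matrix (Fin d) (Fin e) ℂ) (I : Finset (Fin d)) : ℂ :=
  if h : I.card = e then (B.submatrix (fun k => (I.orderIsoOfFin h k : Fin d)) id).det else 0

/-- The columns of `B` form a basis of the subspace `N` of `ℂ^d`. -/
def IsColBasis {d e : ℕ} (B : Matrix (Fin d) (Fin e) ℂ) (N : Submodule ℂ (Fin d → ℂ)) : Prop :=
  LinearIndependent ℂ (fun l => fun i => B i l) ∧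
    Submodule.span ℂ (Set.range fun l => fun i => B i l) = N

noncomputable def qpr {dp dq ep eq : ℕ} (A : Matrix (Fin dq) (Fin dp) ℂ)
    (Bp : Matrix (Fin dp) (Fin ep) ℂ) (Bq : Matrix (Fin dq) (Fin eq) ℂ)
    (I : Finset (Fin dp)) (J : Finset (Fin dq)) : ℂ :=
  ∑ i ∈ Iᶜ, ∑ j ∈ J,
    (-1 : ℂ) ^ (eps i I + eps j J) * A j i * plucker Bp (insert i I) * plucker Bq (J.erase j)

/-!
For `#I = e - 1`, expanding `Δ_{I ∪ {i}}(B)` along the row `i` shows that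
`i ↦ (-1)^ε(i,I) Δ_{I ∪ {i}}(B)` is `B` times a cofactor vector, hence lies in the column
span `N` of `B`; taking `I = K \ {k}` for a `K` with `Δ_K(B) ≠ 0` gives `e` independent such
vectors, so they span `N`. Dually, expanding along the last column,
`∑_{j ∈ J} (-1)^ε(j,J) y_j Δ_{J \ {j}}(B)` is up to sign the minor `Δ_J` of `B` with `y`
appended as a column; these vanish for all `#J = e + 1` iff `y ∈ N`. The quadratic relation
for `(v, I, J)` is this membership test for `A_v` applied to the vector attached to `I`.
-/

lemma neg_one_pow_add_one_add_one_add {R : Type*} [Monoid R] [HasDistribNeg R] (a b : ℕ) :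
    (-1 : R) ^ (a + 1 + 1 + b) = (-1) ^ (a + b) := by
  rw [show a + 1 + 1 + b = a + b + 2 by ring, pow_add, neg_one_sq, mul_one]

lemma Finset.sum_orderEmbOfFin {α M : Type*} [LinearOrder α] [AddCommMonoid M] {k : ℕ}
    (s : Finset α) (h : s.card = k) (f : α → M) :
    ∑ j ∈ s, f j = ∑ r, f (s.orderEmbOfFin h r) := by
  conv_lhs => rw [← s.map_orderEmbOfFin_univ h]
  rw [sum_map]
  rfl

def Matrix.snocCol {α m : Type*} {k : ℕ} (B : Matrix m (Fin k) α) (y : m → α) :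
    Matrix m (Fin (k + 1)) α :=
  Matrix.of fun i => Fin.snoc (B i) (y i)

lemma Matrix.col_snocCol {α m : Type*} {k : ℕ} (B : Matrix m (Fin k) α) (y : m → α) :
    (B.snocCol y).col = Fin.snoc B.col y := by
  funext l i
  induction l using Fin.lastCases with
  | last => rw [Fin.snoc_last]; simp [Matrix.snocCol, Matrix.col]
  | cast l => rw [Fin.snoc_castSucc]; simp [Matrix.snocCol, Matrix.col]

noncomputable def pluckerVec {d e : ℕ} (B : Matrix (Fin d) (Fin e) ℂ) (I : Finset (Fin d)) :
    Fin d → ℂ :=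
  fun i => (-1) ^ eps i I * plucker B (insert i I)

section Plucker

variable {d k : ℕ}

lemma eps_orderEmbOfFin (s : Finset (Fin d)) (h : s.card = k) (r : Fin k) :
    eps (s.orderEmbOfFin h r) s = r + 1 := by
  have : s.filter (· ≤ s.orderEmbOfFin h r) =
      (Finset.Iic r).map (s.orderEmbOfFin h).toEmbedding := by
    ext a
    simp only [mem_filter, mem_map, mem_Iic, RelEmbedding.coe_toEmbedding]
    constructor
    · rintro ⟨has, hle⟩
      obtain ⟨r', rfl⟩ : a ∈ Set.range (s.orderEmbOfFin h) := by simpa using has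
      exact ⟨r', by simpa using hle, rfl⟩
    · rintro ⟨r', hr', rfl⟩
      exact ⟨s.orderEmbOfFin_mem h r', by simpa using hr'⟩
  rw [eps, this, card_map, Fin.card_Iic]

lemma eps_insert_self {i : Fin d} {s : Finset (Fin d)} (hi : i ∉ s) :
    eps i (insert i s) = eps i s + 1 := by
  rw [eps, eps, filter_insert, if_pos le_rfl, card_insert_of_notMem (by simp [hi])]

lemma plucker_of_card_ne (C : Matrix (Fin d) (Fin k) ℂ) {s : Finset (Fin d)}
    (h : s.card ≠ k) : plucker C s = 0 :=
  dif_neg h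

lemma plucker_eq_det (C : Matrix (Fin d) (Fin k) ℂ) {s : Finset (Fin d)} (h : s.card = k) :
    plucker C s = (C.submatrix (s.orderEmbOfFin h) id).det := by
  rw [plucker, dif_pos h]
  rfl

lemma plucker_eq_det_of_strictMono (C : Matrix (Fin d) (Fin k) ℂ) {s : Finset (Fin d)}
    (h : s.card = k) {f : Fin k → Fin d} (hf : StrictMono f) (hfs : ∀ r, f r ∈ s) :
    plucker C s = (C.submatrix f id).det := by
  rw [plucker_eq_det C h, Finset.orderEmbOfFin_unique h hfs hf]

lemma plucker_erase_orderEmbOfFin (C : Matrix (Fin d) (Fin k) ℂ) {s : Finset (Fin d)}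
    (h : s.card = k + 1) (r : Fin (k + 1)) :
    plucker C (s.erase (s.orderEmbOfFin h r)) =
      (C.submatrix (s.orderEmbOfFin h ∘ r.succAbove) id).det := by
  refine plucker_eq_det_of_strictMono C (by simp [h]) ?_ fun r' => ?_
  · exact (s.orderEmbOfFin h).strictMono.comp (Fin.strictMono_succAbove r)
  · simp [Fin.succAbove_ne]

lemma plucker_eq_sum_col (C : Matrix (Fin d) (Fin (k + 1)) ℂ) {s : Finset (Fin d)}
    (h : s.card = k + 1) (l : Fin (k + 1)) :
    plucker C s = ∑ j ∈ s,
      (-1) ^ (eps j s + 1 + l) * C j l * plucker (C.submatrix id l.succAbove) (s.erase j) := by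
  rw [plucker_eq_det C h, Matrix.det_succ_column _ l, sum_orderEmbOfFin s h]
  refine sum_congr rfl fun r _ => ?_
  rw [eps_orderEmbOfFin, neg_one_pow_add_one_add_one_add, plucker_erase_orderEmbOfFin]
  rfl

lemma plucker_eq_sum_row (C : Matrix (Fin d) (Fin (k + 1)) ℂ) {s : Finset (Fin d)}
    (h : s.card = k + 1) {j : Fin d} (hj : j ∈ s) :
    plucker C s = ∑ l : Fin (k + 1),
      (-1) ^ (eps j s + 1 + l) * C j l * plucker (C.submatrix id l.succAbove) (s.erase j) := by
  obtain ⟨r, rfl⟩ : j ∈ Set.range (s.orderEmbOfFin h) := by simpa using hj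
  rw [plucker_eq_det C h, Matrix.det_succ_row _ r]
  refine sum_congr rfl fun l _ => ?_
  rw [eps_orderEmbOfFin, neg_one_pow_add_one_add_one_add, plucker_erase_orderEmbOfFin]
  rfl

lemma plucker_snocCol (B : Matrix (Fin d) (Fin k) ℂ) (y : Fin d → ℂ) {J : Finset (Fin d)}
    (hJ : J.card = k + 1) :
    plucker (B.snocCol y) J =
      (-1) ^ (k + 1) * ∑ j ∈ J, (-1) ^ eps j J * y j * plucker B (J.erase j) := by
  rw [plucker_eq_sum_col _ hJ (Fin.last k), mul_sum]
  refine sum_congr rfl fun j _ => ?_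
  have hB : (B.snocCol y).submatrix id (Fin.last k).succAbove = B := by
    ext i l
    simp [Matrix.snocCol]
  rw [hB, Fin.val_last, pow_add, pow_add]
  simp only [Matrix.snocCol, Matrix.of_apply, Fin.snoc_last]
  ring

lemma linearIndependent_col_of_plucker_ne_zero (C : Matrix (Fin d) (Fin k) ℂ)
    {s : Finset (Fin d)} (hs : plucker C s ≠ 0) : LinearIndependent ℂ C.col := by
  have h : s.card = k := by
    by_contra h
    exact hs (plucker_of_card_ne C h)
  rw [plucker_eq_det C h, ← isUnit_iff_ne_zero, ← Matrix.isUnit_iff_isUnit_det,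
    ← Matrix.mulVec_injective_iff_isUnit] at hs
  rw [← Matrix.mulVec_injective_iff]
  intro x y hxy
  refine hs (funext fun r => ?_)
  simpa [Matrix.mulVec, dotProduct] using congrFun hxy (s.orderEmbOfFin h r)

lemma exists_plucker_ne_zero_of_linearIndependent (C : Matrix (Fin d) (Fin k) ℂ)
    (hC : LinearIndependent ℂ C.col) : ∃ s, plucker C s ≠ 0 := by
  obtain ⟨κ, a, ha, hspan, hli⟩ := exists_linearIndependent'.{0} ℂ C.row
  have : Fintype κ := Fintype.ofInjective a ha
  have hcard : Fintype.card κ = k := by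
    rw [linearIndependent_iff_card_eq_finrank_span.mp hli, Set.finrank, hspan,
      ← Matrix.rank_eq_finrank_span_row, Matrix.rank_eq_finrank_span_cols,
      ← Set.finrank, ← linearIndependent_iff_card_eq_finrank_span.mp hC, Fintype.card_fin]
  set g : Fin k → Fin d := a ∘ (Fintype.equivFinOfCardEq hcard).symm
  have hg : g.Injective := ha.comp (Equiv.injective _)
  have hdet : IsUnit (C.submatrix g id) :=
    Matrix.linearIndependent_rows_iff_isUnit.mp (hli.comp _ (Equiv.injective _))
  set σ := Tuple.sort g
  have hmono : StrictMono (g ∘ σ) :=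
    (Tuple.monotone_sort g).strictMono_of_injective (hg.comp σ.injective)
  refine ⟨univ.image g, ?_⟩
  rw [plucker_eq_det_of_strictMono C (by simp [card_image_of_injective _ hg]) hmono (by simp)]
  change ((C.submatrix g id).submatrix σ id).det ≠ 0
  rw [Matrix.det_permute]
  exact mul_ne_zero (by simp) ((Matrix.isUnit_iff_isUnit_det _).mp hdet).ne_zero

lemma linearIndependent_col_iff_exists_plucker_ne_zero (C : Matrix (Fin d) (Fin k) ℂ) :
    LinearIndependent ℂ C.col ↔ ∃ s, plucker C s ≠ 0 :=
  ⟨exists_plucker_ne_zero_of_linearIndependent C,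
    fun ⟨_, hs⟩ => linearIndependent_col_of_plucker_ne_zero C hs⟩

lemma pluckerVec_eq_mulVec (B : Matrix (Fin d) (Fin (k + 1)) ℂ) {I : Finset (Fin d)}
    (hI : I.card = k) :
    pluckerVec B I = B *ᵥ fun l => (-1) ^ (l : ℕ) * plucker (B.submatrix id l.succAbove) I := by
  funext i
  by_cases hi : i ∈ I
  · obtain ⟨r, rfl⟩ : i ∈ Set.range (I.orderEmbOfFin hI) := by simpa using hi
    set D : Matrix (Fin (k + 1)) (Fin (k + 1)) ℂ := Matrix.of
      (Matrix.vecCons (B (I.orderEmbOfFin hI r)) (B.submatrix (I.orderEmbOfFin hI) id))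
    have hD : D.det = 0 := Matrix.det_zero_of_row_eq (Fin.succ_ne_zero r).symm rfl
    rw [Matrix.det_succ_row_zero] at hD
    rw [pluckerVec, insert_eq_self.mpr hi, plucker_of_card_ne B (by omega), mul_zero, ← hD,
      Matrix.mulVec, dotProduct]
    refine sum_congr rfl fun l _ => ?_
    have hminor : D.submatrix Fin.succ l.succAbove =
        (B.submatrix id l.succAbove).submatrix (I.orderEmbOfFin hI) id := by
      ext; rfl
    have hrow : D 0 l = B (I.orderEmbOfFin hI r) l := rfl
    rw [plucker_eq_det _ hI, ← hminor, hrow]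
    ring
  · have hs : (insert i I).card = k + 1 := by rw [card_insert_of_notMem hi, hI]
    have hsign : (-1 : ℂ) ^ eps i I * (-1) ^ eps i I = 1 := by
      rw [← pow_add, ← two_mul, pow_mul]; norm_num
    rw [pluckerVec, plucker_eq_sum_row B hs (mem_insert_self i I), eps_insert_self hi,
      erase_insert hi, mul_sum, Matrix.mulVec, dotProduct]
    refine sum_congr rfl fun l _ => ?_
    rw [pow_add, pow_add]
    linear_combination
      (-1 : ℂ) ^ (l : ℕ) * B i l * plucker (B.submatrix id l.succAbove) I * hsign

lemma pluckerVec_erase_apply (B : Matrix (Fin d) (Fin k) ℂ) {K : Finset (Fin d)}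
    (hK : K.card = k) {j l : Fin d} (hj : j ∈ K) (hl : l ∈ K) :
    pluckerVec B (K.erase j) l = if l = j then (-1) ^ eps j (K.erase j) * plucker B K else 0 := by
  split_ifs with hlj
  · rw [hlj, pluckerVec, insert_erase hj]
  · have hK₀ := card_pos.mpr ⟨j, hj⟩
    rw [pluckerVec, insert_eq_self.mpr (mem_erase.mpr ⟨hlj, hl⟩),
      plucker_of_card_ne B (by rw [card_erase_of_mem hj]; omega), mul_zero]

end Plucker

namespace IsColBasis

variable {d k : ℕ} {B : Matrix (Fin d) (Fin k) ℂ} {N : Submodule ℂ (Fin d → ℂ)}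

lemma mem_iff_plucker_snocCol_eq_zero (hB : IsColBasis B N) (y : Fin d → ℂ) :
    y ∈ N ↔ ∀ J : Finset (Fin d), J.card = k + 1 → plucker (B.snocCol y) J = 0 := by
  have hcol : LinearIndependent ℂ (Fin.snoc B.col y) ↔ y ∉ N := by
    rw [linearIndependent_finSnoc, ← hB.2]
    exact and_iff_right hB.1
  rw [← not_iff_not, ← hcol, ← Matrix.col_snocCol,
    linearIndependent_col_iff_exists_plucker_ne_zero]
  push Not
  refine ⟨fun ⟨J, hJ⟩ => ⟨J, ?_, hJ⟩, fun ⟨J, _, hJ⟩ => ⟨J, hJ⟩⟩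
  by_contra h
  exact hJ (plucker_of_card_ne _ h)

lemma pluckerVec_mem (hB : IsColBasis B N) {I : Finset (Fin d)} (hI : I.card + 1 = k) :
    pluckerVec B I ∈ N := by
  obtain rfl := hI
  rw [← hB.2, pluckerVec_eq_mulVec B rfl]
  exact (Matrix.range_mulVecLin B).le ⟨_, rfl⟩

lemma span_pluckerVec (hB : IsColBasis B N) :
    Submodule.span ℂ (pluckerVec B '' {I | I.card + 1 = k}) = N := by
  set S := pluckerVec B '' {I | I.card + 1 = k}
  have hSN : Submodule.span ℂ S ≤ N :=
    Submodule.span_le.mpr (Set.image_subset_iff.mpr fun I hI => hB.pluckerVec_mem hI)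
  obtain ⟨K, hK⟩ := exists_plucker_ne_zero_of_linearIndependent B hB.1
  have hKcard : K.card = k := by
    by_contra h
    exact hK (plucker_of_card_ne B h)
  -- on the rows in `K`, the family `v` is diagonal with entries `±Δ_K(B) ≠ 0`
  let v : K → Fin d → ℂ := fun j => pluckerVec B (K.erase j)
  have hv : LinearIndependent ℂ v := by
    refine linearIndependent_iff'.mpr fun s c hs j hj => ?_
    have hsj := congrFun hs j
    rw [Finset.sum_apply, sum_eq_single j (fun i _ hij => ?_) (absurd hj)] at hsj
    · simpa [v, pluckerVec_erase_apply B hKcard j.2 j.2, hK] using hsj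
    · simp [v, pluckerVec_erase_apply B hKcard i.2 j.2, Ne.symm hij]
  have hvS : Submodule.span ℂ (Set.range v) ≤ Submodule.span ℂ S := by
    refine Submodule.span_mono (Set.range_subset_iff.mpr fun j => ⟨K.erase j, ?_, rfl⟩)
    have := card_pos.mpr ⟨j.1, j.2⟩
    simp only [Set.mem_ofPred_eq, card_erase_of_mem j.2]
    omega
  have hvN : Submodule.span ℂ (Set.range v) = N := by
    refine Submodule.eq_of_le_of_finrank_eq (hvS.trans hSN) ?_
    rw [finrank_span_eq_card hv, ← hB.2, finrank_span_eq_card hB.1]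
    simp [hKcard]
  exact le_antisymm hSN (hvN ▸ hvS)

end IsColBasis

lemma qpr_eq_plucker_snocCol {dp dq ep eq : ℕ} (A : Matrix (Fin dq) (Fin dp) ℂ)
    (Bp : Matrix (Fin dp) (Fin ep) ℂ) (Bq : Matrix (Fin dq) (Fin eq) ℂ)
    {I : Finset (Fin dp)} (hI : I.card + 1 = ep) {J : Finset (Fin dq)} (hJ : J.card = eq + 1) :
    qpr A Bp Bq I J = (-1) ^ (eq + 1) * plucker (Bq.snocCol (A *ᵥ pluckerVec Bp I)) J := by
  have hvanish : ∀ i ∈ I, pluckerVec Bp I i = 0 := fun i hi => by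
    rw [pluckerVec, insert_eq_self.mpr hi, plucker_of_card_ne Bp (by omega), mul_zero]
  have hmulVec : ∀ j, (A *ᵥ pluckerVec Bp I) j = ∑ i ∈ Iᶜ, A j i * pluckerVec Bp I i := by
    intro j
    rw [Matrix.mulVec, dotProduct, ← sum_compl_add_sum I,
      sum_eq_zero (s := I) fun i hi => by rw [hvanish i hi, mul_zero], add_zero]
  rw [plucker_snocCol _ _ hJ, ← mul_assoc, ← pow_add, ← two_mul, pow_mul, neg_one_sq,
    one_pow, one_mul, qpr, sum_comm]
  refine sum_congr rfl fun j _ => ?_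
  rw [hmulVec, mul_sum, sum_mul]
  refine sum_congr rfl fun i _ => ?_
  rw [pluckerVec, pow_add]
  ring

theorem stmt15_general {Q₀ Q₁ : Type}
    (src tgt : Q₁ → Q₀) (d : Q₀ → ℕ)
    (A : ∀ v : Q₁, Matrix (Fin (d (tgt v))) (Fin (d (src v))) ℂ)
    (e : Q₀ → ℕ)
    (N : ∀ p : Q₀, Submodule ℂ (Fin (d p) → ℂ))
    (B : ∀ p : Q₀, Matrix (Fin (d p)) (Fin (e p)) ℂ)
    (hB : ∀ p : Q₀, IsColBasis (B p) (N p)) :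
    (∀ v : Q₁, ∀ x ∈ N (src v), (A v).mulVec x ∈ N (tgt v)) ↔
      (∀ v : Q₁, ∀ I : Finset (Fin (d (src v))), I.card + 1 = e (src v) →
        ∀ J : Finset (Fin (d (tgt v))), J.card = e (tgt v) + 1 →
          qpr (A v) (B (src v)) (B (tgt v)) I J = 0) := by
  have hmem : ∀ v I, I.card + 1 = e (src v) →
      ((A v *ᵥ pluckerVec (B (src v)) I ∈ N (tgt v)) ↔
        ∀ J : Finset (Fin (d (tgt v))), J.card = e (tgt v) + 1 →
          qpr (A v) (B (src v)) (B (tgt v)) I J = 0) := fun v I hI => by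
    rw [(hB (tgt v)).mem_iff_plucker_snocCol_eq_zero]
    refine forall₂_congr fun J hJ => ?_
    simp [qpr_eq_plucker_snocCol _ _ _ hI hJ]
  refine forall_congr' fun v => ⟨fun hA I hI => ?_, fun hq => ?_⟩
  · exact (hmem v I hI).mp (hA _ ((hB (src v)).pluckerVec_mem hI))
  · suffices N (src v) ≤ (N (tgt v)).comap (A v).mulVecLin from fun x hx => this hx
    rw [← (hB (src v)).span_pluckerVec, Submodule.span_le, Set.image_subset_iff]
    exact fun I hI => (hmem v I hI).mpr (hq I hI)

theorem stmt15 {Q₀ Q₁ : Type} [Fintype Q₀] [Fintype Q₁]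
    (src tgt : Q₁ → Q₀) (d : Q₀ → ℕ)
    (A : ∀ v : Q₁, Matrix (Fin (d (tgt v))) (Fin (d (src v))) ℂ)
    (e : Q₀ → ℕ)
    (N : ∀ p : Q₀, Submodule ℂ (Fin (d p) → ℂ))
    (B : ∀ p : Q₀, Matrix (Fin (d p)) (Fin (e p)) ℂ)
    (hB : ∀ p : Q₀, IsColBasis (B p) (N p)) :
    (∀ v : Q₁, ∀ x ∈ N (src v), (A v).mulVec x ∈ N (tgt v)) ↔
      (∀ v : Q₁, ∀ I : Finset (Fin (d (src v))), I.card + 1 = e (src v) →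
        ∀ J : Finset (Fin (d (tgt v))), J.card = e (tgt v) + 1 →
          qpr (A v) (B (src v)) (B (tgt v)) I J = 0) :=
  stmt15_general src tgt d A e N B hB
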